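/- For every real number Z with Z ≠ 1 and Z ≠ -1 and every natural number T, the sum Z̄(Z,T) = ∑_{t=0}^{T-1} (∑_{i=0}^{t-1} Z^{t-i-1})^2 equals T/(1-Z)^2 + (Z^T - 1)(Z^T - 2Z - 1)/((Z-1)^3 (1+Z)). -/

import Mathlib

open Finset

theorem sum_range_pow_sub_sub_one {R : Type*} [Semiring R] (x : R) (t : ℕ) :
    ∑ i ∈ range t, x ^ (t - i - 1) = ∑ i ∈ range t, x ^ i := by
  simpa only [Nat.sub_sub, Nat.add_comm 1] using sum_range_reflect (x ^ ·) t

theorem sum_range_sq_geom_sum {K : Type*} [Field K] {x : K} (hx₁ : x ≠ 1) (hx₂ : x ≠ -1)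
    (T : ℕ) :
    ∑ t ∈ range T, (∑ i ∈ range t, x ^ i) ^ 2
      = T / (1 - x) ^ 2 + (x ^ T - 1) * (x ^ T - 2 * x - 1) / ((x - 1) ^ 3 * (1 + x)) := by
  have h_sub : x - 1 ≠ 0 := sub_ne_zero.mpr hx₁
  have h_sub' : 1 - x ≠ 0 := sub_ne_zero.mpr hx₁.symm
  have h_add : 1 + x ≠ 0 := by
    rw [add_comm, ← sub_neg_eq_add]
    exact sub_ne_zero.mpr hx₂
  induction T with
  | zero => simp
  | succ T ih =>
    rw [sum_range_succ, ih, geom_sum_eq hx₁, pow_succ]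
    push_cast
    field_simp
    ring

/-- **Closed form of Z̄.** For every real `Z` with `Z ≠ 1` and `Z ≠ -1` and natural `T`,
`Z̄(Z,T) = ∑_{t=0}^{T-1} (∑_{i=0}^{t-1} Z^{t-i-1})^2
       = T/(1-Z)^2 + (Z^T - 1)(Z^T - 2Z - 1)/((Z-1)^3 (1+Z))`. -/
theorem zbar_closed_form (Z : ℝ) (hZ1 : Z ≠ 1) (hZ2 : Z ≠ -1) (T : ℕ) :
    ∑ t ∈ Finset.range T, (∑ i ∈ Finset.range t, Z ^ (t - i - 1)) ^ 2
      = (T : ℝ) / (1 - Z) ^ 2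
        + (Z ^ T - 1) * (Z ^ T - 2 * Z - 1) / ((Z - 1) ^ 3 * (1 + Z)) := by
  simp only [sum_range_pow_sub_sub_one]
  exact sum_range_sq_geom_sum hZ1 hZ2 T
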